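/- arXiv:2204.03602 — 2 statements merged into one kernel-verified Lean document; each statement's English description precedes it below -/
import Mathlib

section
/- Moments of the trimodal distribution: let n ≥ 1 be an integer and assume E|W|^n < ∞ and E|X|^n < ∞ for X ~ TD(θ). Then E(X^n) = Σ_{k=0}^{n} C(n,k)·μ^{n−k}·σ^k·{ ((ρ+δ)σ/Z_θ)·E(W^k) + (δσ/Z_θ)·[ E(𝟙{W ≤ −α√Y}·W^k) − E(𝟙{W ≤ α√Y}·W^k) ] }, where C(n,k) is the binomial coefficient and the truncated moments are E(𝟙{W ≤ ±α√Y}·W^k) = ∫₀^∞ ( ∫_{−∞}^{±α√y} w^k g(w) dw )·y^{p−1}e^{−y}/Γ(p) dy. -/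
open MeasureTheory Real Set Filter

noncomputable def lincGamma (p u : ℝ) : ℝ := ∫ w in (0:ℝ)..u, w ^ (p - 1) * Real.exp (-w)

noncomputable def Tfun (p α x : ℝ) : ℝ := lincGamma p (x ^ 2 / α ^ 2) / Real.Gamma p

noncomputable def gammaPDF (p y : ℝ) : ℝ := y ^ (p - 1) * Real.exp (-y) / Real.Gamma p

noncomputable def Znorm (p σ α ρ δ : ℝ) (g : ℝ → ℝ) : ℝ :=
  σ * ∫ w : ℝ, (ρ + δ * Tfun p α w) * g w

noncomputable def tdPDF (p μ σ α ρ δ : ℝ) (g : ℝ → ℝ) (x : ℝ) : ℝ :=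
  (1 / Znorm p σ α ρ δ g) * (ρ + δ * Tfun p α ((x - μ) / σ)) * g ((x - μ) / σ)

noncomputable def cdfOf (d : ℝ → ℝ) (x : ℝ) : ℝ := ∫ t in Iic x, d t

/-!
After the substitution `x = μ + σ w` and the binomial expansion of `(μ + σ w)ⁿ`, everything
reduces to the moments `∫ wᵏ (ρ + δ T(w)) g(w) dw`. Since `T(w) = P(Y ≤ w²/α²)` for
`Y ~ Gamma(p, 1)`, Fubini turns `∫ f T` into `E ∫_{|w| ≥ α√Y} f`. For `y > 0` the set
`{|w| ≥ α√y}` is the disjoint union of `(-∞, -α√y]` and `[α√y, ∞)`, and the integral over the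
latter is `∫ f - ∫_{(-∞, α√y]} f` because Lebesgue measure has no atoms.
-/

namespace MeasureTheory

variable {X Y : Type*} [MeasurableSpace X] [MeasurableSpace Y] {μ : Measure X} {ν : Measure Y}
  {f : X → ℝ} {ψ : Y → ℝ} {S : Set (X × Y)}

lemma integral_indicator_mul_prodMk_left (hS : MeasurableSet S) (x : X) :
    ∫ y, S.indicator (fun q => f q.1 * ψ q.2) (x, y) ∂ν
      = f x * ∫ y in Prod.mk x ⁻¹' S, ψ y ∂ν := by
  rw [← integral_const_mul, ← integral_indicator (hS.preimage measurable_prodMk_left)]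
  congr 1 with y

lemma integral_indicator_mul_prodMk_right (hS : MeasurableSet S) (y : Y) :
    ∫ x, S.indicator (fun q => f q.1 * ψ q.2) (x, y) ∂μ
      = (∫ x in (·, y) ⁻¹' S, f x ∂μ) * ψ y := by
  rw [← integral_mul_const, ← integral_indicator (hS.preimage measurable_prodMk_right)]
  congr 1 with x

lemma integrable_mul_setIntegral_prodMk_left [SFinite ν] (hf : Integrable f μ)
    (hψ : Integrable ψ ν) (hS : MeasurableSet S) :
    Integrable (fun x => f x * ∫ y in Prod.mk x ⁻¹' S, ψ y ∂ν) μ := by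
  simpa only [integral_indicator_mul_prodMk_left hS] using
    ((hf.mul_prod hψ).indicator hS).integral_prod_left

lemma integrable_setIntegral_prodMk_right_mul [SFinite μ] [SFinite ν] (hf : Integrable f μ)
    (hψ : Integrable ψ ν) (hS : MeasurableSet S) :
    Integrable (fun y => (∫ x in (·, y) ⁻¹' S, f x ∂μ) * ψ y) ν := by
  simpa only [integral_indicator_mul_prodMk_right hS] using
    ((hf.mul_prod hψ).indicator hS).integral_prod_right

lemma integral_mul_setIntegral_prodMk_comm [SFinite μ] [SFinite ν] (hf : Integrable f μ)
    (hψ : Integrable ψ ν) (hS : MeasurableSet S) :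
    ∫ x, f x * (∫ y in Prod.mk x ⁻¹' S, ψ y ∂ν) ∂μ
      = ∫ y, (∫ x in (·, y) ⁻¹' S, f x ∂μ) * ψ y ∂ν := by
  simp_rw [← integral_indicator_mul_prodMk_left hS, ← integral_indicator_mul_prodMk_right hS]
  exact integral_integral_swap ((hf.mul_prod hψ).indicator hS)

end MeasureTheory

lemma setIntegral_setOf_le_abs {f : ℝ → ℝ} {a : ℝ} (ha : 0 < a) (hf : Integrable f) :
    ∫ w in {w | a ≤ |w|}, f w = (∫ w in Iic (-a), f w) + ((∫ w, f w) - ∫ w in Iic a, f w) := by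
  have hunion : {w | a ≤ |w|} = Iic (-a) ∪ (Iio a)ᶜ := by
    ext w
    simp [le_abs', or_comm]
  have hdisj : Disjoint (Iic (-a)) (Iio a)ᶜ :=
    disjoint_compl_right_iff_subset.2 (Iic_subset_Iio.2 (by linarith))
  rw [hunion, setIntegral_union hdisj measurableSet_Iio.compl hf.integrableOn hf.integrableOn,
    setIntegral_compl measurableSet_Iio hf, integral_Iic_eq_integral_Iio (x := a)]

lemma integrableOn_gammaPDF {p : ℝ} (hp : 0 < p) : IntegrableOn (gammaPDF p) (Ioi 0) := by
  have h : IntegrableOn (fun y => Real.exp (-y) * y ^ (p - 1) * (Real.Gamma p)⁻¹) (Ioi 0) :=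
    (Real.GammaIntegral_convergent hp).mul_const _
  refine h.congr_fun (fun y _ => ?_) measurableSet_Ioi
  simp only [gammaPDF]
  ring

lemma integral_gammaPDF {p : ℝ} (hp : 0 < p) : ∫ y in Ioi (0:ℝ), gammaPDF p y = 1 := by
  have h : ∫ y in Ioi (0:ℝ), gammaPDF p y
      = (∫ y in Ioi (0:ℝ), Real.exp (-y) * y ^ (p - 1)) / Real.Gamma p := by
    rw [← integral_div]
    refine setIntegral_congr_fun measurableSet_Ioi (fun y _ => ?_)
    simp only [gammaPDF]
    ring
  rw [h, ← Real.Gamma_eq_integral hp, div_self (Real.Gamma_pos_of_pos hp).ne']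

lemma Tfun_eq_setIntegral_gammaPDF (p α w : ℝ) :
    Tfun p α w = ∫ y in Iic (w ^ 2 / α ^ 2), gammaPDF p y ∂(volume.restrict (Ioi 0)) := by
  rw [Measure.restrict_restrict measurableSet_Iic, Iic_inter_Ioi, Tfun, lincGamma,
    intervalIntegral.integral_of_le (by positivity), ← integral_div]
  rfl

/-- For `f w = w ^ k * g w` this is the paper's truncated moment `E(𝟙{W ≤ c√Y} Wᵏ)`. -/
noncomputable def integralIicSqrtGamma (p c : ℝ) (f : ℝ → ℝ) : ℝ :=
  ∫ y in Ioi (0:ℝ), (∫ w in Iic (c * √y), f w) * gammaPDF p y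

lemma integrable_mul_Tfun {p : ℝ} (α : ℝ) (hp : 0 < p) {f : ℝ → ℝ} (hf : Integrable f) :
    Integrable (fun w => f w * Tfun p α w) := by
  simp_rw [Tfun_eq_setIntegral_gammaPDF]
  exact integrable_mul_setIntegral_prodMk_left hf (integrableOn_gammaPDF hp)
    (S := {q | q.2 ≤ q.1 ^ 2 / α ^ 2}) (measurableSet_le (by fun_prop) (by fun_prop))

lemma integral_mul_Tfun {p α : ℝ} (hp : 0 < p) (hα : 0 < α) {f : ℝ → ℝ} (hf : Integrable f) :
    ∫ w, f w * Tfun p α w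
      = (∫ w, f w) + (integralIicSqrtGamma p (-α) f - integralIicSqrtGamma p α f) := by
  set S : Set (ℝ × ℝ) := {q | q.2 ≤ q.1 ^ 2 / α ^ 2}
  have hγ := integrableOn_gammaPDF hp
  have hIic (c : ℝ) :
      IntegrableOn (fun y => (∫ w in Iic (c * √y), f w) * gammaPDF p y) (Ioi 0) :=
    integrable_setIntegral_prodMk_right_mul hf hγ (S := {q | q.1 ≤ c * √q.2})
      (measurableSet_le (by fun_prop) (by fun_prop))
  have hsection : ∀ y ∈ Ioi (0:ℝ), ∫ w in (·, y) ⁻¹' S, f w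
      = (∫ w in Iic (-α * √y), f w) + ((∫ w, f w) - ∫ w in Iic (α * √y), f w) := by
    intro y hy
    have hS_y : (·, y) ⁻¹' S = {w | α * √y ≤ |w|} := by
      ext w
      change y ≤ w ^ 2 / α ^ 2 ↔ α * √y ≤ |w|
      rw [le_div_iff₀ (by positivity), ← sq_abs w,
        ← pow_le_pow_iff_left₀ (by positivity) (abs_nonneg w) two_ne_zero, mul_pow,
        sq_sqrt (le_of_lt hy), mul_comm]
    rw [hS_y, setIntegral_setOf_le_abs (mul_pos hα (sqrt_pos.2 hy)) hf, neg_mul]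
  calc ∫ w, f w * Tfun p α w
      = ∫ w, f w * ∫ y in Prod.mk w ⁻¹' S, gammaPDF p y ∂(volume.restrict (Ioi 0)) := by
        simp_rw [Tfun_eq_setIntegral_gammaPDF]
        rfl
    _ = ∫ y in Ioi 0, (∫ w in (·, y) ⁻¹' S, f w) * gammaPDF p y :=
        integral_mul_setIntegral_prodMk_comm hf hγ (measurableSet_le (by fun_prop) (by fun_prop))
    _ = ∫ y in Ioi 0, ((∫ w, f w) * gammaPDF p y + ((∫ w in Iic (-α * √y), f w) * gammaPDF p y
          - (∫ w in Iic (α * √y), f w) * gammaPDF p y)) :=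
        setIntegral_congr_fun measurableSet_Ioi fun y hy => by rw [hsection y hy]; ring
    _ = _ := by
        rw [integral_add (hγ.const_mul _) ((hIic (-α)).sub' (hIic α)),
          integral_sub (hIic _) (hIic _), integral_const_mul, integral_gammaPDF hp, mul_one]
        rfl

lemma integrable_mul_add_mul_Tfun {p : ℝ} (α ρ δ : ℝ) (hp : 0 < p) {f : ℝ → ℝ}
    (hf : Integrable f) : Integrable (fun w => f w * (ρ + δ * Tfun p α w)) := by
  simp_rw [mul_add, mul_left_comm (f _) δ]
  exact (hf.mul_const ρ).add ((integrable_mul_Tfun α hp hf).const_mul δ)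

lemma integral_mul_add_mul_Tfun {p α : ℝ} (ρ δ : ℝ) (hp : 0 < p) (hα : 0 < α) {f : ℝ → ℝ}
    (hf : Integrable f) :
    ∫ w, f w * (ρ + δ * Tfun p α w)
      = (ρ + δ) * (∫ w, f w)
        + δ * (integralIicSqrtGamma p (-α) f - integralIicSqrtGamma p α f) := by
  simp_rw [mul_add, mul_left_comm (f _) δ]
  rw [integral_add (hf.mul_const ρ) ((integrable_mul_Tfun α hp hf).const_mul δ),
    integral_mul_const, integral_const_mul, integral_mul_Tfun hp hα hf]
  ring

lemma integrable_pow_mul_of_le {f : ℝ → ℝ} {k n : ℕ} (hf : Integrable f)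
    (hfn : Integrable (fun w => |w| ^ n * f w)) (hk : k ≤ n) :
    Integrable (fun w => w ^ k * f w) := by
  refine (hf.norm.add hfn.norm).mono' ((continuous_pow k).aestronglyMeasurable.mul
    hf.aestronglyMeasurable) (Eventually.of_forall fun w => ?_)
  have hpow : |w| ^ k ≤ 1 + |w| ^ n := by
    rcases le_total |w| 1 with h | h
    · linarith [pow_le_one₀ (abs_nonneg w) h (n := k), pow_nonneg (abs_nonneg w) n]
    · linarith [pow_le_pow_right₀ h hk]
  simp only [Pi.add_apply, norm_mul, norm_pow, Real.norm_eq_abs, abs_abs]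
  nlinarith [abs_nonneg (f w)]

lemma integral_eq_abs_mul_integral_comp_add_mul (F : ℝ → ℝ) (μ : ℝ) {σ : ℝ} (hσ : σ ≠ 0) :
    ∫ x, F x = |σ| * ∫ w, F (μ + σ * w) := by
  rw [Measure.integral_comp_mul_left (fun y => F (μ + y)), integral_add_left_eq_self, abs_inv,
    smul_eq_mul, mul_inv_cancel_left₀ (abs_ne_zero.2 hσ)]

lemma integral_add_mul_pow_mul (h : ℝ → ℝ) (μ σ : ℝ) (n : ℕ)
    (hh : ∀ k ≤ n, Integrable (fun w => w ^ k * h w)) :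
    ∫ w, (μ + σ * w) ^ n * h w
      = ∑ k ∈ Finset.range (n + 1), (n.choose k : ℝ) * μ ^ (n - k) * σ ^ k * ∫ w, w ^ k * h w := by
  have hexpand (w : ℝ) : (μ + σ * w) ^ n * h w
      = ∑ k ∈ Finset.range (n + 1), (n.choose k : ℝ) * μ ^ (n - k) * σ ^ k * (w ^ k * h w) := by
    rw [add_comm, add_pow, Finset.sum_mul]
    exact Finset.sum_congr rfl fun k _ => by ring
  simp_rw [hexpand]
  rw [integral_finsetSum _ fun k hk => (hh k (Finset.mem_range_succ_iff.1 hk)).const_mul _]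
  simp_rw [integral_const_mul]

theorem stmt8_general (p μ σ α ρ δ : ℝ) (hp : 0 < p) (hσ : 0 < σ) (hα : 0 < α)
    (g : ℝ → ℝ) (hgi : Integrable g) (n : ℕ)
    (hW : Integrable (fun w : ℝ => |w| ^ n * g w)) :
    (∫ x : ℝ, x ^ n * tdPDF p μ σ α ρ δ g x)
      = ∑ k ∈ Finset.range (n + 1),
          (n.choose k : ℝ) * μ ^ (n - k) * σ ^ k *
            (((ρ + δ) * σ / Znorm p σ α ρ δ g) * (∫ w : ℝ, w ^ k * g w)
              + (δ * σ / Znorm p σ α ρ δ g) *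
                  ((∫ y in Ioi (0:ℝ),
                      (∫ w in Iic (-α * Real.sqrt y), w ^ k * g w) * gammaPDF p y)
                    - (∫ y in Ioi (0:ℝ),
                        (∫ w in Iic (α * Real.sqrt y), w ^ k * g w) * gammaPDF p y))) := by
  have hmoment (k : ℕ) (hk : k ≤ n) : Integrable (fun w => w ^ k * g w) :=
    integrable_pow_mul_of_le hgi hW hk
  have hdensity (k : ℕ) (w : ℝ) : w ^ k * tdPDF p μ σ α ρ δ g (μ + σ * w)
      = (w ^ k * g w) * (ρ + δ * Tfun p α w) / Znorm p σ α ρ δ g := by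
    simp only [tdPDF, add_sub_cancel_left, mul_div_cancel_left₀ _ hσ.ne']
    ring
  rw [integral_eq_abs_mul_integral_comp_add_mul _ μ hσ.ne', abs_of_pos hσ,
    integral_add_mul_pow_mul (fun w => tdPDF p μ σ α ρ δ g (μ + σ * w)) μ σ n fun k hk => by
      simpa only [hdensity] using (integrable_mul_add_mul_Tfun α ρ δ hp (hmoment k hk)).div_const _,
    Finset.mul_sum]
  refine Finset.sum_congr rfl fun k hk => ?_
  simp_rw [hdensity, integral_div,
    integral_mul_add_mul_Tfun ρ δ hp hα (hmoment k (Finset.mem_range_succ_iff.1 hk))]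
  unfold integralIicSqrtGamma
  ring

/-- formula for the `n`-th moment of the trimodal distribution. -/
theorem stmt8 (p μ σ α ρ δ : ℝ) (hp : 0 < p) (hσ : 0 < σ) (hα : 0 < α)
    (hρ : 0 ≤ ρ) (hδ : 0 ≤ δ) (hρδ : 0 < ρ + δ)
    (g : ℝ → ℝ) (hg0 : ∀ x, 0 ≤ g x) (hgm : Measurable g)
    (hgi : Integrable g) (hg1 : (∫ x : ℝ, g x) = 1)
    (n : ℕ) (hn : 1 ≤ n)
    (hW : Integrable (fun w : ℝ => |w| ^ n * g w))
    (hX : Integrable (fun x : ℝ => |x| ^ n * tdPDF p μ σ α ρ δ g x)) :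
    (∫ x : ℝ, x ^ n * tdPDF p μ σ α ρ δ g x)
      = ∑ k ∈ Finset.range (n + 1),
          (n.choose k : ℝ) * μ ^ (n - k) * σ ^ k *
            (((ρ + δ) * σ / Znorm p σ α ρ δ g) * (∫ w : ℝ, w ^ k * g w)
              + (δ * σ / Znorm p σ α ρ δ g) *
                  ((∫ y in Ioi (0:ℝ),
                      (∫ w in Iic (-α * Real.sqrt y), w ^ k * g w) * gammaPDF p y)
                    - (∫ y in Ioi (0:ℝ),
                        (∫ w in Iic (α * Real.sqrt y), w ^ k * g w) * gammaPDF p y))) :=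
  stmt8_general p μ σ α ρ δ hp hσ hα g hgi n hW
end

section
/- Stochastic representation: assume g(x) > 0 for all x ∈ ℝ, so that G : ℝ → (0,1) is a continuous strictly increasing bijection with inverse G⁻¹. Define the density h on (0,1) by h(u) = (σ/Z_θ)·[ρ + δ·T(G⁻¹(u); α, p)] and let H(u) = ∫₀ᵘ h(t) dt be its cumulative distribution function. Then for every x ∈ ℝ, the cumulative distribution function of TD(θ) satisfies F(x; θ) = H(G((x−μ)/σ)). Consequently, if U is a random variable with density h, then X = μ + σ·G⁻¹(U) has density f(·; θ), i.e. X ~ TD(θ). -/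
open MeasureTheory Real Set Filter
open scoped ENNReal

/-!
Write `c w = ρ + δ T(w)`. Since `g > 0`, the cdf `G` is a strictly increasing map onto `(0,1)`,
so `G` pushes `g(w) dw` forward to the uniform law on `(0,1)` and `G⁻¹` pushes the uniform law
back to `g(w) dw` (inverse-transform sampling). Reweighting, `G⁻¹` pushes `c(G⁻¹ u) du` on `(0,1)`
to `c(w) g(w) dw`, and the affine map `w ↦ μ + σ w` turns `(σ/Z) c(w) g(w) dw` into
`f(x; θ) dx`. Evaluating both laws on `(-∞, x]` gives the cdf identity, because the `u ∈ (0,1)`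
with `μ + σ G⁻¹(u) ≤ x` are exactly those in `(0, G((x - μ)/σ)]`.
-/

lemma lincGamma_nonneg (p : ℝ) {u : ℝ} (hu : 0 ≤ u) : 0 ≤ lincGamma p u :=
  intervalIntegral.integral_nonneg hu fun _ hw => mul_nonneg (rpow_nonneg hw.1 _) (exp_nonneg _)

lemma intervalIntegrable_rpow_mul_exp_neg {p : ℝ} (hp : 0 < p) {a b : ℝ} (ha : 0 ≤ a)
    (hab : a ≤ b) : IntervalIntegrable (fun w : ℝ => w ^ (p - 1) * exp (-w)) volume a b := by
  rw [intervalIntegrable_iff_integrableOn_Ioc_of_le hab]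
  refine ((GammaIntegral_convergent hp).mono_set
    (Ioc_subset_Ioi_self.trans (Ioi_subset_Ioi ha))).congr_fun (fun _ _ => mul_comm _ _)
    measurableSet_Ioc

lemma lincGamma_monotoneOn {p : ℝ} (hp : 0 < p) : MonotoneOn (lincGamma p) (Ici 0) := by
  intro a ha b _ hab
  rw [lincGamma, lincGamma, ← intervalIntegral.integral_add_adjacent_intervals
    (intervalIntegrable_rpow_mul_exp_neg hp le_rfl ha)
    (intervalIntegrable_rpow_mul_exp_neg hp ha hab)]
  exact le_add_of_nonneg_right <| intervalIntegral.integral_nonneg hab fun _ hw =>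
    mul_nonneg (rpow_nonneg ((mem_Ici.1 ha).trans hw.1) _) (exp_nonneg _)

lemma Tfun_nonneg {p : ℝ} (hp : 0 < p) (α x : ℝ) : 0 ≤ Tfun p α x :=
  div_nonneg (lincGamma_nonneg p (by positivity)) (Gamma_pos_of_pos hp).le

lemma measurable_Tfun {p : ℝ} (hp : 0 < p) (α : ℝ) : Measurable (Tfun p α) := by
  have hmono : Monotone fun u => lincGamma p (max u 0) := fun a b hab =>
    lincGamma_monotoneOn hp (mem_Ici.2 (le_max_right _ _)) (mem_Ici.2 (le_max_right _ _))
      (max_le_max_right 0 hab)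
  have hT : Tfun p α = fun x => lincGamma p (max (x ^ 2 / α ^ 2) 0) / Gamma p := by
    funext x
    rw [Tfun, max_eq_left (by positivity)]
  rw [hT]
  exact (hmono.measurable.comp (by fun_prop)).div_const _

lemma setIntegral_pos_of_forall_pos {α : Type*} [MeasurableSpace α] {μ : Measure α}
    {f : α → ℝ} {s : Set α} (hf : ∀ x, 0 < f x) (hfi : IntegrableOn f s μ) (hs : 0 < μ s) :
    0 < ∫ x in s, f x ∂μ := by
  rw [setIntegral_pos_iff_support_of_nonneg_ae (ae_of_all _ fun x => (hf x).le) hfi,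
    Function.support_eq_univ fun x => (hf x).ne', univ_inter]
  exact hs

lemma setIntegral_eq_toReal_withDensity {α : Type*} [MeasurableSpace α] {μ : Measure α}
    {f : α → ℝ} (hf : ∀ x, 0 ≤ f x) (hfm : Measurable f) {s : Set α} (hs : MeasurableSet s) :
    ∫ x in s, f x ∂μ = (μ.withDensity (fun x => ENNReal.ofReal (f x)) s).toReal := by
  rw [withDensity_apply _ hs]
  exact integral_eq_lintegral_of_nonneg_ae (ae_of_all _ hf) hfm.aestronglyMeasurable

lemma cdfOf_eq_setIntegral_preimage_of_map_withDensity {α : Type*} [MeasurableSpace α]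
    {ν : Measure α} {X : α → ℝ} (hX : Measurable X) {h : α → ℝ} {f : ℝ → ℝ}
    (hlaw : (ν.withDensity fun u => ENNReal.ofReal (h u)).map X
      = volume.withDensity fun x => ENNReal.ofReal (f x))
    (hh : ∀ u, 0 ≤ h u) (hhm : Measurable h) (hf : ∀ x, 0 ≤ f x) (hfm : Measurable f) (x : ℝ) :
    cdfOf f x = ∫ u in X ⁻¹' Iic x, h u ∂ν := by
  rw [cdfOf, setIntegral_eq_toReal_withDensity hf hfm measurableSet_Iic, ← hlaw,
    Measure.map_apply hX measurableSet_Iic, setIntegral_eq_toReal_withDensity hh hhm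
      (hX measurableSet_Iic)]

lemma map_withDensity_comp {α β : Type*} [MeasurableSpace α] [MeasurableSpace β]
    {φ : α → β} (hφ : Measurable φ) {f : β → ℝ≥0∞} (hf : Measurable f) (μ : Measure α) :
    (μ.withDensity fun x => f (φ x)).map φ = (μ.map φ).withDensity f := by
  ext s hs
  rw [Measure.map_apply hφ hs, withDensity_apply _ (hφ hs), withDensity_apply _ hs,
    setLIntegral_map hs hf hφ]

lemma map_affine_withDensity {σ : ℝ} (hσ : σ ≠ 0) (μ : ℝ) {f : ℝ → ℝ≥0∞} (hf : Measurable f) :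
    (volume.withDensity fun w => ENNReal.ofReal |σ| * f (μ + σ * w)).map (fun w => μ + σ * w)
      = volume.withDensity f := by
  have hmap : (volume : Measure ℝ).map (fun w => μ + σ * w) = ENNReal.ofReal |σ⁻¹| • volume := by
    rw [show (fun w => μ + σ * w) = (fun x => μ + x) ∘ (fun w => σ * w) from rfl,
      ← Measure.map_map (measurable_const_add μ) (measurable_const_mul σ),
      Real.map_volume_mul_left hσ, Measure.map_smul, map_add_left_eq_self]
  rw [show (fun w => ENNReal.ofReal |σ| * f (μ + σ * w))
      = ENNReal.ofReal |σ| • fun w => f (μ + σ * w) from rfl,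
    withDensity_smul' _ _ ENNReal.ofReal_ne_top, Measure.map_smul,
    map_withDensity_comp (by fun_prop) hf, hmap, withDensity_smul_measure, smul_smul,
    ← ENNReal.ofReal_mul (abs_nonneg σ), ← abs_mul, mul_inv_cancel₀ hσ, abs_one,
    ENNReal.ofReal_one, one_smul]

section ProbabilityIntegralTransform

variable {g : ℝ → ℝ} (hgpos : ∀ x, 0 < g x) (hgi : Integrable g)
include hgpos hgi

lemma cdfOf_strictMono : StrictMono (cdfOf g) := by
  intro a b hab
  have hdiff : cdfOf g b - cdfOf g a = ∫ t in a..b, g t :=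
    intervalIntegral.integral_Iic_sub_Iic hgi.integrableOn hgi.integrableOn
  have hpos : 0 < ∫ t in a..b, g t :=
    intervalIntegral.intervalIntegral_pos_of_pos hgi.intervalIntegrable hgpos hab
  linarith

lemma cdfOf_mem_Ioo (hg1 : ∫ x, g x = 1) (y : ℝ) : cdfOf g y ∈ Ioo 0 1 := by
  have hIic : 0 < cdfOf g y := setIntegral_pos_of_forall_pos hgpos hgi.integrableOn
    (by simp)
  have hIoi : 0 < ∫ t in Ioi y, g t := setIntegral_pos_of_forall_pos hgpos hgi.integrableOn
    (by simp)
  have hsum : cdfOf g y + ∫ t in Ioi y, g t = 1 := by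
    rw [cdfOf, intervalIntegral.integral_Iic_add_Ioi hgi.integrableOn hgi.integrableOn, hg1]
  exact ⟨hIic, by linarith⟩

lemma map_cdfOf_withDensity (hg1 : ∫ x, g x = 1)
    (hsurj : Ioo 0 1 ⊆ range (cdfOf g)) :
    (volume.withDensity fun x => ENNReal.ofReal (g x)).map (cdfOf g)
      = volume.restrict (Ioo 0 1) := by
  have := isFiniteMeasure_withDensity_ofReal hgi.2
  refine Measure.ext_of_Iic _ _ fun a => ?_
  rw [Measure.map_apply (cdfOf_strictMono hgpos hgi).monotone.measurable measurableSet_Iic,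
    Measure.restrict_apply measurableSet_Iic]
  have hG := cdfOf_mem_Ioo hgpos hgi hg1
  rcases le_or_gt a 0 with ha0 | ha0
  · have h1 : cdfOf g ⁻¹' Iic a = ∅ :=
      eq_empty_of_forall_notMem fun y hy => (hG y).1.not_ge (le_trans hy ha0)
    have h2 : Iic a ∩ Ioo 0 1 = ∅ :=
      eq_empty_of_forall_notMem fun t ht => ht.2.1.not_ge (le_trans ht.1 ha0)
    rw [h1, h2, measure_empty, measure_empty]
  rcases lt_or_ge a 1 with ha1 | ha1
  · obtain ⟨y, rfl⟩ := hsurj ⟨ha0, ha1⟩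
    have h1 : cdfOf g ⁻¹' Iic (cdfOf g y) = Iic y := by
      ext z
      exact (cdfOf_strictMono hgpos hgi).le_iff_le
    have h2 : Iic (cdfOf g y) ∩ Ioo 0 1 = Ioc 0 (cdfOf g y) := by
      ext t
      simp only [mem_inter_iff, mem_Iic, mem_Ioo, mem_Ioc]
      exact ⟨fun ⟨h, h0, _⟩ => ⟨h0, h⟩, fun ⟨h0, h⟩ => ⟨h, h0, h.trans_lt ha1⟩⟩
    rw [h1, h2, withDensity_apply _ measurableSet_Iic, ← ofReal_integral_eq_lintegral_ofReal
      hgi.integrableOn (ae_of_all _ fun x => (hgpos x).le), Real.volume_Ioc, sub_zero, cdfOf]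
  · have h1 : cdfOf g ⁻¹' Iic a = univ := eq_univ_of_forall fun y => (hG y).2.le.trans ha1
    have h2 : Iic a ∩ Ioo 0 1 = Ioo 0 1 :=
      inter_eq_self_of_subset_right fun t ht => ht.2.le.trans ha1
    rw [h1, h2, withDensity_apply _ MeasurableSet.univ, Measure.restrict_univ,
      ← ofReal_integral_eq_lintegral_ofReal hgi (ae_of_all _ fun x => (hgpos x).le), hg1,
      Real.volume_Ioo, sub_zero]

lemma map_withDensity_comp_inverse_cdfOf (hg1 : ∫ x, g x = 1) {Ginv : ℝ → ℝ}
    (hGinvm : Measurable Ginv) (hleft : Function.LeftInverse Ginv (cdfOf g))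
    (hsurj : Ioo 0 1 ⊆ range (cdfOf g)) {k : ℝ → ℝ≥0∞} (hk : Measurable k) :
    ((volume.restrict (Ioo 0 1)).withDensity fun u => k (Ginv u)).map Ginv
      = volume.withDensity fun w => ENNReal.ofReal (g w) * k w := by
  rw [map_withDensity_comp hGinvm hk, ← map_cdfOf_withDensity hgpos hgi hg1 hsurj,
    Measure.map_map hGinvm (cdfOf_strictMono hgpos hgi).monotone.measurable, hleft.comp_eq_id,
    Measure.map_id, ← withDensity_mul₀ hgi.aemeasurable.ennreal_ofReal hk.aemeasurable]
  rfl

lemma preimage_Iic_inter_Ioo_eq_Ioc_cdfOf (hg1 : ∫ x, g x = 1) {Ginv : ℝ → ℝ}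
    (hright : ∀ u ∈ Ioo (0:ℝ) 1, cdfOf g (Ginv u) = u) (y : ℝ) :
    Ginv ⁻¹' Iic y ∩ Ioo 0 1 = Ioc 0 (cdfOf g y) := by
  have hG := cdfOf_strictMono hgpos hgi
  ext u
  simp only [mem_inter_iff, mem_preimage, mem_Iic, mem_Ioo, mem_Ioc]
  constructor
  · rintro ⟨hy, h0, h1⟩
    exact ⟨h0, hright u ⟨h0, h1⟩ ▸ hG.monotone hy⟩
  · rintro ⟨h0, hy⟩
    have h1 : u < 1 := hy.trans_lt (cdfOf_mem_Ioo hgpos hgi hg1 y).2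
    refine ⟨hG.le_iff_le.1 ?_, h0, h1⟩
    rwa [hright u ⟨h0, h1⟩]

end ProbabilityIntegralTransform

section TrimodalDensity

variable {p ρ δ : ℝ} (hp : 0 < p) (hρ : 0 ≤ ρ) (hδ : 0 ≤ δ)
include hp hρ hδ

lemma add_mul_Tfun_nonneg (α w : ℝ) : 0 ≤ ρ + δ * Tfun p α w :=
  add_nonneg hρ (mul_nonneg hδ (Tfun_nonneg hp α w))

lemma Znorm_nonneg {σ : ℝ} (hσ : 0 ≤ σ) (α : ℝ) {g : ℝ → ℝ} (hg : ∀ x, 0 ≤ g x) :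
    0 ≤ Znorm p σ α ρ δ g :=
  mul_nonneg hσ (integral_nonneg fun w => mul_nonneg (add_mul_Tfun_nonneg hp hρ hδ α w) (hg w))

lemma tdPDF_nonneg {σ : ℝ} (hσ : 0 ≤ σ) (μ α : ℝ) {g : ℝ → ℝ} (hg : ∀ x, 0 ≤ g x) (x : ℝ) :
    0 ≤ tdPDF p μ σ α ρ δ g x :=
  mul_nonneg (mul_nonneg (one_div_nonneg.2 (Znorm_nonneg hp hρ hδ hσ α hg))
    (add_mul_Tfun_nonneg hp hρ hδ α _)) (hg _)

end TrimodalDensity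

lemma measurable_tdPDF {p : ℝ} (hp : 0 < p) (μ σ α ρ δ : ℝ) {g : ℝ → ℝ} (hgm : Measurable g) :
    Measurable (tdPDF p μ σ α ρ δ g) := by
  have hT := measurable_Tfun hp α
  unfold tdPDF
  fun_prop

lemma tdPDF_const_add_mul {σ : ℝ} (hσ : σ ≠ 0) (p μ α ρ δ : ℝ) (g : ℝ → ℝ) (w : ℝ) :
    tdPDF p μ σ α ρ δ g (μ + σ * w) = 1 / Znorm p σ α ρ δ g * (ρ + δ * Tfun p α w) * g w := by
  rw [tdPDF, show (μ + σ * w - μ) / σ = w by field_simp; ring]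

lemma map_const_add_mul_withDensity_eq_tdPDF {p σ : ℝ} (hp : 0 < p) (hσ : 0 < σ)
    (μ α ρ δ : ℝ) {g : ℝ → ℝ} (hg : ∀ x, 0 ≤ g x) (hgm : Measurable g) :
    (volume.withDensity fun w => ENNReal.ofReal (g w)
        * ENNReal.ofReal (σ / Znorm p σ α ρ δ g * (ρ + δ * Tfun p α w))).map (fun w => μ + σ * w)
      = volume.withDensity fun x => ENNReal.ofReal (tdPDF p μ σ α ρ δ g x) := by
  have hdens : (fun w => ENNReal.ofReal (g w)
      * ENNReal.ofReal (σ / Znorm p σ α ρ δ g * (ρ + δ * Tfun p α w)))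
      = fun w => ENNReal.ofReal |σ| * ENNReal.ofReal (tdPDF p μ σ α ρ δ g (μ + σ * w)) := by
    funext w
    rw [← ENNReal.ofReal_mul (hg w), ← ENNReal.ofReal_mul (abs_nonneg σ),
      tdPDF_const_add_mul hσ.ne', abs_of_pos hσ]
    ring_nf
  rw [hdens]
  exact map_affine_withDensity (f := fun x => ENNReal.ofReal (tdPDF p μ σ α ρ δ g x)) hσ.ne' μ
    (measurable_tdPDF hp μ σ α ρ δ hgm).ennreal_ofReal

lemma map_const_add_mul_inverse_cdfOf_withDensity_eq_tdPDF {p σ : ℝ} (hp : 0 < p) (hσ : 0 < σ)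
    (μ α ρ δ : ℝ) {g : ℝ → ℝ} (hgpos : ∀ x, 0 < g x) (hgm : Measurable g) (hgi : Integrable g)
    (hg1 : ∫ x, g x = 1) {Ginv : ℝ → ℝ} (hGinvm : Measurable Ginv)
    (hleft : Function.LeftInverse Ginv (cdfOf g)) (hsurj : Ioo 0 1 ⊆ range (cdfOf g)) :
    ((volume.restrict (Ioo 0 1)).withDensity fun u =>
        ENNReal.ofReal (σ / Znorm p σ α ρ δ g * (ρ + δ * Tfun p α (Ginv u)))).map
      (fun u => μ + σ * Ginv u)
      = volume.withDensity fun x => ENNReal.ofReal (tdPDF p μ σ α ρ δ g x) := by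
  have hT := measurable_Tfun hp α
  rw [show (fun u => μ + σ * Ginv u) = (fun w => μ + σ * w) ∘ Ginv from rfl,
    ← Measure.map_map (by fun_prop) hGinvm,
    map_withDensity_comp_inverse_cdfOf hgpos hgi hg1 hGinvm hleft hsurj
      (k := fun w => ENNReal.ofReal (σ / Znorm p σ α ρ δ g * (ρ + δ * Tfun p α w))) (by fun_prop)]
  exact map_const_add_mul_withDensity_eq_tdPDF hp hσ μ α ρ δ (fun x => (hgpos x).le) hgm

theorem stmt12_general (p μ σ α ρ δ : ℝ) (hp : 0 < p) (hσ : 0 < σ)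
    (hρ : 0 ≤ ρ) (hδ : 0 ≤ δ)
    (g : ℝ → ℝ) (hgpos : ∀ x, 0 < g x) (hgm : Measurable g)
    (hgi : Integrable g) (hg1 : (∫ x : ℝ, g x) = 1)
    (Ginv : ℝ → ℝ) (hGinvm : Measurable Ginv)
    (hleft : ∀ x : ℝ, Ginv (cdfOf g x) = x)
    (hright : ∀ u ∈ Ioo (0:ℝ) 1, cdfOf g (Ginv u) = u) :
    (∀ x : ℝ,
      cdfOf (tdPDF p μ σ α ρ δ g) x
        = ∫ t in (0:ℝ)..(cdfOf g ((x - μ) / σ)),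
            (σ / Znorm p σ α ρ δ g) * (ρ + δ * Tfun p α (Ginv t)))
    ∧ Measure.map (fun u : ℝ => μ + σ * Ginv u)
        (volume.withDensity (fun u : ℝ => ENNReal.ofReal
          (Set.indicator (Ioo (0:ℝ) 1)
            (fun t => (σ / Znorm p σ α ρ δ g) * (ρ + δ * Tfun p α (Ginv t))) u)))
      = volume.withDensity (fun x : ℝ => ENNReal.ofReal (tdPDF p μ σ α ρ δ g x)) := by
  have hg0 (x : ℝ) : 0 ≤ g x := (hgpos x).le
  have hlaw := map_const_add_mul_inverse_cdfOf_withDensity_eq_tdPDF hp hσ μ α ρ δ hgpos hgm hgi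
    hg1 hGinvm hleft fun u hu => ⟨Ginv u, hright u hu⟩
  refine ⟨fun x => ?_, ?_⟩
  · have hX : Measurable fun u => μ + σ * Ginv u := by fun_prop
    have hpre : (fun u => μ + σ * Ginv u) ⁻¹' Iic x = Ginv ⁻¹' Iic ((x - μ) / σ) := by
      ext u
      simp only [mem_preimage, mem_Iic, le_div_iff₀ hσ]
      constructor <;> intro <;> linarith
    have hT := measurable_Tfun hp α
    rw [cdfOf_eq_setIntegral_preimage_of_map_withDensity hX hlaw
      (fun u => mul_nonneg (div_nonneg hσ.le (Znorm_nonneg hp hρ hδ hσ.le α hg0))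
        (add_mul_Tfun_nonneg hp hρ hδ α (Ginv u)))
      (by fun_prop) (tdPDF_nonneg hp hρ hδ hσ.le μ α hg0) (measurable_tdPDF hp μ σ α ρ δ hgm),
      Measure.restrict_restrict (hX measurableSet_Iic), hpre,
      preimage_Iic_inter_Ioo_eq_Ioc_cdfOf hgpos hgi hg1 hright,
      intervalIntegral.integral_of_le (cdfOf_mem_Ioo hgpos hgi hg1 _).1.le]
  · rw [← withDensity_indicator measurableSet_Ioo] at hlaw
    convert hlaw using 3
    exact (indicator_comp_of_zero ENNReal.ofReal_zero).symm

/-- stochastic representation `F(x;θ) = H(G((x−μ)/σ))` and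
`X = μ + σ G⁻¹(U) ~ TD(θ)` when `U` has density `h`. -/
theorem stmt12 (p μ σ α ρ δ : ℝ) (hp : 0 < p) (hσ : 0 < σ) (hα : 0 < α)
    (hρ : 0 ≤ ρ) (hδ : 0 ≤ δ) (hρδ : 0 < ρ + δ)
    (g : ℝ → ℝ) (hgpos : ∀ x, 0 < g x) (hgm : Measurable g)
    (hgi : Integrable g) (hg1 : (∫ x : ℝ, g x) = 1)
    (Ginv : ℝ → ℝ) (hGinvm : Measurable Ginv)
    (hleft : ∀ x : ℝ, Ginv (cdfOf g x) = x)
    (hright : ∀ u ∈ Ioo (0:ℝ) 1, cdfOf g (Ginv u) = u) :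
    (∀ x : ℝ,
      cdfOf (tdPDF p μ σ α ρ δ g) x
        = ∫ t in (0:ℝ)..(cdfOf g ((x - μ) / σ)),
            (σ / Znorm p σ α ρ δ g) * (ρ + δ * Tfun p α (Ginv t)))
    ∧ Measure.map (fun u : ℝ => μ + σ * Ginv u)
        (volume.withDensity (fun u : ℝ => ENNReal.ofReal
          (Set.indicator (Ioo (0:ℝ) 1)
            (fun t => (σ / Znorm p σ α ρ δ g) * (ρ + δ * Tfun p α (Ginv t))) u)))
      = volume.withDensity (fun x : ℝ => ENNReal.ofReal (tdPDF p μ σ α ρ δ g x)) :=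
  stmt12_general p μ σ α ρ δ hp hσ hρ hδ g hgpos hgm hgi hg1 Ginv hGinvm hleft hright
end
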